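/- Let f, g, h ∈ ℂ⟦x,y⟧ with f = gh, and suppose the intersection numbers I_g = m(g, i_g), I_h = m(h, i_h), and m(g,h) are all finite. Then I_f = m(f, i_f) is finite and I_f = I_g + I_h + 6·m(g,h). -/

import Mathlib

set_option synthInstance.maxHeartbeats 1000000

/-- Formal partial derivative of a two-variable power series with respect to the
`i`-th variable. -/
noncomputable def pd (i : Fin 2) (f : MvPowerSeries (Fin 2) ℂ) : MvPowerSeries (Fin 2) ℂ :=
  fun e => (e i + 1 : ℂ) * f (e + Finsupp.single i 1)

/-- `i_f = f_y² f_xx - 2 f_x f_y f_xy + f_x² f_yy`. -/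
noncomputable def iInv (f : MvPowerSeries (Fin 2) ℂ) : MvPowerSeries (Fin 2) ℂ :=
  (pd 1 f) ^ 2 * pd 0 (pd 0 f) - 2 * pd 0 f * pd 1 f * pd 0 (pd 1 f) +
    (pd 0 f) ^ 2 * pd 1 (pd 1 f)

/-- The intersection number `m(f,g) = dim_ℂ ℂ⟦x,y⟧/(f,g)`, valued in `ℕ ∪ {∞}`. -/
noncomputable def interNum (f g : MvPowerSeries (Fin 2) ℂ) : ℕ∞ :=
  (Module.rank ℂ (MvPowerSeries (Fin 2) ℂ ⧸ Ideal.span {f, g})).toENat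

open MvPowerSeries Finsupp

local notation "R2" => MvPowerSeries (Fin 2) ℂ

/-! ### Derivative lemmas -/

theorem coeff_pd (i : Fin 2) (f : R2) (e : Fin 2 →₀ ℕ) :
    MvPowerSeries.coeff e (pd i f) =
      ((e i : ℂ) + 1) * MvPowerSeries.coeff (e + Finsupp.single i 1) f := rfl

theorem pd_add (i : Fin 2) (f g : R2) : pd i (f + g) = pd i f + pd i g := by
  apply MvPowerSeries.ext; intro e
  simp only [coeff_pd, map_add]; ring

theorem pd_key (i : Fin 2) (F G : (Fin 2 →₀ ℕ) → ℂ) (e : Fin 2 →₀ ℕ) :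
    ∑ p ∈ Finset.HasAntidiagonal.antidiagonal (e + Finsupp.single i 1),
        (((p.1 : Fin 2 →₀ ℕ) i : ℕ) : ℂ) * F p.1 * G p.2
      = ∑ p ∈ Finset.HasAntidiagonal.antidiagonal e,
          (((p.1 : Fin 2 →₀ ℕ) i : ℕ) + 1 : ℂ) * F (p.1 + Finsupp.single i 1) * G p.2 := by
  classical
  rw [← Finset.sum_filter_of_ne (p := fun p => (p.1 : Fin 2 →₀ ℕ) i ≠ 0)
    (by intro p _ hne; intro h0; apply hne; rw [h0]; push_cast; ring)]
  refine Finset.sum_nbij' (fun p => (p.1 - Finsupp.single i 1, p.2))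
    (fun p => (p.1 + Finsupp.single i 1, p.2)) ?_ ?_ ?_ ?_ ?_
  · intro p hp
    simp only [Finset.mem_filter, Finset.HasAntidiagonal.mem_antidiagonal] at hp
    rw [Finset.HasAntidiagonal.mem_antidiagonal]
    have hle : Finsupp.single i 1 ≤ p.1 := by
      rw [Finsupp.single_le_iff]
      omega
    have := hp.1
    ext j
    by_cases hj : j = i
    · subst hj
      have h1 := DFunLike.congr_fun this j
      simp only [Finsupp.add_apply, Finsupp.tsub_apply, Finsupp.single_eq_same] at h1 ⊢
      omega
    · have h1 := DFunLike.congr_fun this j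
      simp only [Finsupp.add_apply, Finsupp.tsub_apply,
        Finsupp.single_eq_of_ne hj] at h1 ⊢
      omega
  · intro p hp
    rw [Finset.HasAntidiagonal.mem_antidiagonal] at hp
    simp only [Finset.mem_filter, Finset.HasAntidiagonal.mem_antidiagonal]
    constructor
    · rw [← hp]; ext j; simp only [Finsupp.add_apply, Finsupp.coe_add, Pi.add_apply]; ring
    · simp
  · intro p hp
    simp only [Finset.mem_filter, Finset.HasAntidiagonal.mem_antidiagonal] at hp
    have hle : Finsupp.single i 1 ≤ p.1 := by rw [Finsupp.single_le_iff]; omega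
    ext <;> simp [tsub_add_cancel_of_le hle]
  · intro p hp
    ext <;> simp
  · intro p hp
    simp only [Finset.mem_filter, Finset.HasAntidiagonal.mem_antidiagonal] at hp
    have hle : Finsupp.single i 1 ≤ p.1 := by rw [Finsupp.single_le_iff]; omega
    have h1 : p.1 - Finsupp.single i 1 + Finsupp.single i 1 = p.1 :=
      tsub_add_cancel_of_le hle
    rw [h1]
    congr 1
    congr 1
    simp only [Finsupp.tsub_apply, Finsupp.single_eq_same]
    have : 1 ≤ p.1 i := by omega
    push_cast [Nat.cast_sub this]
    ring

theorem coeff_pd2 (i : Fin 2) (f : R2) (e : Fin 2 →₀ ℕ) :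
    MvPowerSeries.coeff e (pd i f) =
      ((e i : ℂ) + 1) * MvPowerSeries.coeff (e + Finsupp.single i 1) f := rfl

theorem pd_mul (i : Fin 2) (f g : R2) : pd i (f * g) = pd i f * g + f * pd i g := by
  classical
  apply MvPowerSeries.ext; intro e
  rw [map_add, coeff_pd2, MvPowerSeries.coeff_mul, MvPowerSeries.coeff_mul,
    MvPowerSeries.coeff_mul, Finset.mul_sum]
  have split : ∀ p ∈ Finset.HasAntidiagonal.antidiagonal (e + Finsupp.single i 1),
      ((e i : ℂ) + 1) * (MvPowerSeries.coeff p.1 f * MvPowerSeries.coeff p.2 g)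
        = ((p.1 i : ℕ) : ℂ) * MvPowerSeries.coeff p.1 f * MvPowerSeries.coeff p.2 g
          + ((p.2 i : ℕ) : ℂ) * MvPowerSeries.coeff p.2 g * MvPowerSeries.coeff p.1 f := by
    intro p hp
    rw [Finset.HasAntidiagonal.mem_antidiagonal] at hp
    have h1 : p.1 i + p.2 i = e i + 1 := by
      have := DFunLike.congr_fun hp i
      simpa using this
    have h2 : ((e i : ℂ) + 1) = ((p.1 i : ℕ) : ℂ) + ((p.2 i : ℕ) : ℂ) := by
      rw [← Nat.cast_add, h1]; push_cast; ring
    rw [h2]; ring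
  rw [Finset.sum_congr rfl split, Finset.sum_add_distrib]
  congr 1
  · rw [pd_key i (fun u => MvPowerSeries.coeff u f) (fun u => MvPowerSeries.coeff u g) e]
    apply Finset.sum_congr rfl
    intro p hp
    rw [coeff_pd2]
  · rw [Finsupp.sum_antidiagonal_swap (e + Finsupp.single i 1)
        (fun u v => ((v i : ℕ) : ℂ) * MvPowerSeries.coeff v g * MvPowerSeries.coeff u f),
      pd_key i (fun u => MvPowerSeries.coeff u g) (fun u => MvPowerSeries.coeff u f) e,
      Finsupp.sum_antidiagonal_swap e
        (fun u v => (((u i : ℕ) : ℂ) + 1) * MvPowerSeries.coeff (u + Finsupp.single i 1) g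
          * MvPowerSeries.coeff v f)]
    apply Finset.sum_congr rfl
    intro p hp
    rw [coeff_pd2]
    ring

theorem iInv_mul (g h : R2) :
    ∃ r : R2, iInv (g * h) = h ^ 3 * iInv g + g ^ 3 * iInv h + g * h * r := by
  set gx := pd 0 g; set gy := pd 1 g; set hx := pd 0 h; set hy := pd 1 h
  set gxx := pd 0 (pd 0 g); set gxy := pd 0 (pd 1 g); set gyy := pd 1 (pd 1 g)
  set hxx := pd 0 (pd 0 h); set hxy := pd 0 (pd 1 h); set hyy := pd 1 (pd 1 h)
  refine ⟨((-2) * gy^2 * hx^2 + 4 * gx * gy * hx * hy + (-2) * gx^2 * hy^2 + 2 * h * gy * hy * gxx + (-2) * h * gy * hx * gxy + h * gy^2 * hxx + (-2) * h * gx * hy * gxy + 2 * h * gx * hx * gyy + (-2) * h * gx * gy * hxy + h * gx^2 * hyy + g * hy^2 * gxx + (-2) * g * hx * hy * gxy + g * hx^2 * gyy + 2 * g * gy * hy * hxx + (-2) * g * gy * hx * hxy + (-2) * g * gx * hy * hxy + 2 * g * gx * hx * hyy), ?_⟩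
  simp only [iInv, pd_mul, pd_add]
  ring

/-! ### Power series divisibility lemmas -/

theorem X_dvd_of_X_mul_dvd {s : R2} (hd : (X 0 : R2) ∣ X 1 * s) : (X 0 : R2) ∣ s := by
  rw [MvPowerSeries.X_dvd_iff] at hd ⊢
  intro m hm
  have h1 := hd (Finsupp.single 1 1 + m) (by simp [Finsupp.add_apply, hm])
  rwa [show (X 1 : R2) = monomial (Finsupp.single 1 1) 1 from rfl,
    MvPowerSeries.coeff_add_monomial_mul, one_mul] at h1

theorem X0_ne_zero : (X 0 : R2) ≠ 0 := by
  intro h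
  have := congrArg (MvPowerSeries.coeff (Finsupp.single 0 1)) h
  simp [MvPowerSeries.coeff_X] at this

theorem X_dvd_of_X_pow_mul_dvd (m : ℕ) (s : R2) (hd : (X 0 : R2) ∣ X 1 ^ m * s) :
    (X 0 : R2) ∣ s := by
  induction m generalizing s with
  | zero => simpa using hd
  | succ n ih =>
    rw [pow_succ, mul_comm ((X 1 : R2) ^ n) (X 1), mul_assoc] at hd
    exact ih s (X_dvd_of_X_mul_dvd hd)

theorem X_pow_dvd_aux (k m : ℕ) (t s : R2) (hts : (X 0 : R2) ^ k * t = X 1 ^ m * s) :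
    (X 0 : R2) ^ k ∣ s := by
  induction k generalizing t s with
  | zero => exact one_dvd s
  | succ n ih =>
    have h1 : (X 0 : R2) ∣ X 1 ^ m * s := by
      rw [← hts, pow_succ, mul_comm ((X 0:R2)^n) (X 0), mul_assoc]
      exact Dvd.intro _ rfl
    obtain ⟨s1, rfl⟩ := X_dvd_of_X_pow_mul_dvd m s h1
    have h2 : (X 0 : R2) * ((X 0:R2) ^ n * t) = (X 0 : R2) * (X 1 ^ m * s1) := by
      rw [← mul_assoc, mul_comm (X 0 : R2) ((X 0:R2)^n), ← pow_succ, hts]; ring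
    have h3 := mul_left_cancel₀ X0_ne_zero h2
    obtain ⟨s2, rfl⟩ := ih t s1 h3
    exact ⟨s2, by ring⟩

theorem exists_pow_X_mem (J : Ideal R2) (hfin : (Module.rank ℂ (R2 ⧸ J)).toENat ≠ ⊤)
    (i : Fin 2) : ∃ k : ℕ, (X i : R2) ^ k ∈ J := by
  classical
  have hrank : Module.rank ℂ (R2 ⧸ J) < Cardinal.aleph0 := by
    by_contra hc
    push_neg at hc
    exact hfin (by rwa [Cardinal.toENat_eq_top])
  set v : ℕ → R2 ⧸ J := fun n => Ideal.Quotient.mk J ((X i : R2) ^ n) with hv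
  have hnli : ¬ LinearIndependent ℂ v := by
    intro hli
    have := hli.cardinal_le_rank
    rw [Cardinal.mk_denumerable] at this
    exact absurd (this.trans_lt hrank) (lt_irrefl _)
  rw [linearIndependent_iff'] at hnli
  push_neg at hnli
  obtain ⟨s, g, hsum, n1, hn1, hgn1⟩ := hnli
  -- the power series ∑ n in s, C (g n) * X i ^ n lies in J
  set P : R2 := ∑ n ∈ s, MvPowerSeries.C (g n) * (X i : R2) ^ n with hP
  have hPJ : P ∈ J := by
    rw [← Ideal.Quotient.eq_zero_iff_mem, hP, map_sum, ← hsum]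
    apply Finset.sum_congr rfl
    intro n hn
    rw [map_mul, hv]
    rw [show (Ideal.Quotient.mk J) ((MvPowerSeries.C) (g n)) = algebraMap ℂ _ (g n)
      from rfl]
    rw [← Algebra.smul_def]
  -- minimal exponent with nonzero coefficient
  set T : Finset ℕ := s.filter (fun n => g n ≠ 0) with hT
  have hTne : T.Nonempty := ⟨n1, by simp [hT, hn1, hgn1]⟩
  set n0 := T.min' hTne with hn0
  have hn0T : n0 ∈ T := T.min'_mem hTne
  have hn0s : n0 ∈ s := (Finset.mem_filter.mp hn0T).1
  have hgn0 : g n0 ≠ 0 := (Finset.mem_filter.mp hn0T).2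
  set Q : R2 := ∑ n ∈ T, MvPowerSeries.C (g n) * (X i : R2) ^ (n - n0) with hQ
  have hPT : P = ∑ n ∈ T, MvPowerSeries.C (g n) * (X i : R2) ^ n := by
    rw [hP, hT]
    rw [Finset.sum_filter_of_ne]
    intro n hn hne h0
    exact hne (by rw [h0, map_zero, zero_mul])
  have hfact : P = (X i : R2) ^ n0 * Q := by
    rw [hPT, hQ, Finset.mul_sum]
    apply Finset.sum_congr rfl
    intro n hn
    have hle : n0 ≤ n := T.min'_le n (by exact hn)
    rw [← mul_assoc, mul_comm ((X i:R2)^n0), mul_assoc, ← pow_add]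
    congr 2
    omega
  have hQunit : IsUnit Q := by
    rw [MvPowerSeries.isUnit_iff_constantCoeff]
    have hcc : MvPowerSeries.constantCoeff Q = g n0 := by
      rw [hQ, map_sum]
      rw [Finset.sum_eq_single n0]
      · rw [map_mul, Nat.sub_self, pow_zero, map_one, mul_one, MvPowerSeries.constantCoeff_C]
      · intro n hn hne
        rw [map_mul, map_pow, MvPowerSeries.constantCoeff_X, zero_pow, mul_zero]
        have hle : n0 ≤ n := T.min'_le n hn
        omega
      · intro hn0n
        exact absurd hn0T hn0n
    rw [hcc]
    exact isUnit_iff_ne_zero.mpr hgn0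
  obtain ⟨u, hu⟩ := hQunit
  refine ⟨n0, ?_⟩
  have : (X i : R2) ^ n0 = P * ↑u⁻¹ := by
    rw [hfact, ← hu, mul_assoc, Units.mul_inv, mul_one]
  rw [this]
  exact Ideal.mul_mem_right _ _ hPJ

theorem mem_span_c_of_mul (b c : R2) (hbc : interNum b c ≠ ⊤) (w : R2)
    (hw : b * w ∈ Ideal.span {c}) : w ∈ Ideal.span {c} := by
  obtain ⟨k0, hk0⟩ := exists_pow_X_mem (Ideal.span {b, c}) hbc 0
  obtain ⟨k1, hk1⟩ := exists_pow_X_mem (Ideal.span {b, c}) hbc 1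
  set k := max k0 k1 with hk
  have hx : (X 0 : R2) ^ k ∈ Ideal.span {b, c} := by
    have : (X 0 : R2) ^ k = X 0 ^ (k - k0) * X 0 ^ k0 := by rw [← pow_add]; congr 1; omega
    rw [this]; exact Ideal.mul_mem_left _ _ hk0
  have hy : (X 1 : R2) ^ k ∈ Ideal.span {b, c} := by
    have : (X 1 : R2) ^ k = X 1 ^ (k - k1) * X 1 ^ k1 := by rw [← pow_add]; congr 1; omega
    rw [this]; exact Ideal.mul_mem_left _ _ hk1
  rw [Ideal.mem_span_singleton] at hw ⊢
  obtain ⟨d, hd⟩ := hw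
  rw [Ideal.mem_span_pair] at hx hy
  obtain ⟨α, β, hαβ⟩ := hx
  obtain ⟨γ, δ, hγδ⟩ := hy
  -- X0^k * w = c * (α*d + β*w)
  have hxw : (X 0 : R2) ^ k * w = c * (α * d + β * w) := by
    rw [← hαβ]; ring_nf; rw [show α * b * w = α * (b * w) by ring, hd]; ring
  have hyw : (X 1 : R2) ^ k * w = c * (γ * d + δ * w) := by
    rw [← hγδ]; ring_nf; rw [show γ * b * w = γ * (b * w) by ring, hd]; ring
  by_cases hc : c = 0
  · subst hc
    -- then X0^k = α * b, so b ≠ 0, and b * w = 0 gives w = 0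
    simp only [zero_mul, mul_zero, add_zero] at hαβ hd
    have hb : b ≠ 0 := by
      intro h0
      rw [h0, mul_zero] at hαβ
      exact pow_ne_zero k X0_ne_zero hαβ.symm
    have : w = 0 := by
      rcases mul_eq_zero.mp hd with h | h
      · exact absurd h hb
      · exact h
    exact ⟨0, by rw [this, mul_zero]⟩
  · -- c ≠ 0
    set s := α * d + β * w with hs
    set t := γ * d + δ * w with ht
    have key : c * ((X 1:R2) ^ k * s - (X 0:R2) ^ k * t) = 0 := by
      have e1 : (X 1:R2) ^ k * ((X 0:R2) ^ k * w) = (X 1:R2)^k * (c * s) := by rw [hxw]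
      have e2 : (X 0:R2) ^ k * ((X 1:R2) ^ k * w) = (X 0:R2)^k * (c * t) := by rw [hyw]
      have : (X 1:R2)^k * (c * s) = (X 0:R2)^k * (c * t) := by
        rw [← e1, ← e2]; ring
      rw [mul_sub]
      rw [show c * ((X 1:R2)^k * s) = (X 1:R2)^k * (c*s) by ring, this]
      ring
    have hst : (X 0:R2) ^ k * t = (X 1:R2) ^ k * s := by
      have := sub_eq_zero.mp (by
        rcases mul_eq_zero.mp key with h | h
        · exact absurd h hc
        · exact h)
      exact this.symm
    obtain ⟨s', hs'⟩ := X_pow_dvd_aux k k t s hst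
    -- X0^k * w = c * s = c * (X0^k * s')
    have : (X 0:R2) ^ k * w = (X 0:R2)^k * (c * s') := by
      rw [hxw, hs']; ring
    have hw' : w = c * s' := mul_left_cancel₀ (pow_ne_zero k X0_ne_zero) this
    exact ⟨s', hw'⟩

/-! ### Intersection number lemmas -/

theorem interNum_comm (a b : R2) : interNum a b = interNum b a := by
  unfold interNum; rw [Set.pair_comm]

theorem interNum_add_mul (a b e : R2) : interNum a (b + a * e) = interNum a b := by
  unfold interNum
  rw [Ideal.span_pair_add_left_mul]

set_option maxHeartbeats 2000000 in
/-- Additivity of the intersection number. -/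
theorem interNum_mul_left (a b c : R2) (hbc : interNum b c ≠ ⊤) :
    interNum (a * b) c = interNum a c + interNum b c := by
  classical
  set J1 : Ideal R2 := Ideal.span {a * b, c} with hJ1
  set J0 : Ideal R2 := Ideal.span {a, c} with hJ0
  set J2 : Ideal R2 := Ideal.span {b, c} with hJ2
  have hbJ2 : b ∈ J2 := Ideal.subset_span (Or.inl rfl)
  have hcJ1 : c ∈ J1 := Ideal.subset_span (Or.inr rfl)
  have habJ1 : a * b ∈ J1 := Ideal.subset_span (Or.inl rfl)
  have h12 : J1 ≤ J2 := by
    rw [hJ1, Ideal.span_le]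
    rintro z hz
    simp only [Set.mem_insert_iff, Set.mem_singleton_iff] at hz
    rcases hz with rfl | rfl
    · exact Ideal.mul_mem_left _ _ hbJ2
    · exact Ideal.subset_span (Or.inr rfl)
  have hφle : J0 ≤ Submodule.comap (LinearMap.mulLeft R2 b) J1 := by
    rw [hJ0, Ideal.span_le]
    rintro z hz
    simp only [Set.mem_insert_iff, Set.mem_singleton_iff] at hz
    rcases hz with rfl | rfl
    · show b * z ∈ J1
      rw [mul_comm]
      exact habJ1
    · show b * z ∈ J1
      exact Ideal.mul_mem_left _ _ hcJ1
  set ψ : (R2 ⧸ J1) →ₗ[R2] R2 ⧸ J2 :=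
    Submodule.mapQ J1 J2 LinearMap.id h12 with hψ
  set φ : (R2 ⧸ J0) →ₗ[R2] R2 ⧸ J1 :=
    Submodule.mapQ J0 J1 (LinearMap.mulLeft R2 b) hφle with hφ
  set ψc := ψ.restrictScalars ℂ with hψc
  set φc := φ.restrictScalars ℂ with hφc
  have hψapp : ∀ z : R2, ψc (Submodule.Quotient.mk z) = Submodule.Quotient.mk z := by
    intro z
    show ψ (Submodule.Quotient.mk z) = Submodule.Quotient.mk z
    rw [hψ, Submodule.mapQ_apply, LinearMap.id_apply]
  have hφapp : ∀ z : R2, φc (Submodule.Quotient.mk z) = Submodule.Quotient.mk (b * z) := by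
    intro z
    show φ (Submodule.Quotient.mk z) = Submodule.Quotient.mk (b * z)
    rw [hφ, Submodule.mapQ_apply, LinearMap.mulLeft_apply]
  have hsurj : Function.Surjective ψc := by
    intro y
    obtain ⟨z, rfl⟩ := Submodule.Quotient.mk_surjective _ y
    exact ⟨Submodule.Quotient.mk z, hψapp z⟩
  have hkerr : LinearMap.ker ψc = LinearMap.range φc := by
    ext x
    obtain ⟨z, rfl⟩ := Submodule.Quotient.mk_surjective _ x
    simp only [LinearMap.mem_ker, LinearMap.mem_range, hψapp]
    rw [Submodule.Quotient.mk_eq_zero]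
    constructor
    · intro hz
      have hz2 : z ∈ J2 := hz
      rw [hJ2, Ideal.mem_span_pair] at hz2
      obtain ⟨u, v, huv⟩ := hz2
      refine ⟨Submodule.Quotient.mk u, ?_⟩
      rw [hφapp, Submodule.Quotient.eq]
      have : b * u - z = -(v * c) := by rw [← huv]; ring
      rw [this]
      exact neg_mem (Ideal.mul_mem_left _ _ hcJ1)
    · rintro ⟨w0, hw⟩
      obtain ⟨w, rfl⟩ := Submodule.Quotient.mk_surjective _ w0
      rw [hφapp, Submodule.Quotient.eq] at hw
      have h1 : b * w - z ∈ J2 := h12 hw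
      have h2 : b * w ∈ J2 := Ideal.mul_mem_right _ _ hbJ2
      have : z = b * w - (b * w - z) := by ring
      rw [this]
      exact Submodule.sub_mem _ h2 h1
  have hinj : Function.Injective φc := by
    rw [← LinearMap.ker_eq_bot]
    rw [Submodule.eq_bot_iff]
    intro x hx
    obtain ⟨z, rfl⟩ := Submodule.Quotient.mk_surjective _ x
    rw [LinearMap.mem_ker, hφapp, Submodule.Quotient.mk_eq_zero] at hx
    have hx1 : b * z ∈ J1 := hx
    rw [hJ1, Ideal.mem_span_pair] at hx1
    obtain ⟨u, v, huv⟩ := hx1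
    have hbz : b * (z - u * a) ∈ Ideal.span {c} := by
      rw [Ideal.mem_span_singleton]
      refine ⟨v, ?_⟩
      linear_combination -huv
    have hz := mem_span_c_of_mul b c hbc _ hbz
    rw [Ideal.mem_span_singleton] at hz
    obtain ⟨q, hq⟩ := hz
    rw [Submodule.Quotient.mk_eq_zero]
    rw [hJ0, Ideal.mem_span_pair]
    exact ⟨u, q, by linear_combination -hq⟩
  have e0 := LinearMap.rank_range_add_rank_ker ψc
  have e1 : Module.rank ℂ (LinearMap.range ψc) = Module.rank ℂ (R2 ⧸ J2) := by
    rw [LinearMap.range_eq_top.mpr hsurj]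
    exact rank_top ℂ _
  have e2 : Module.rank ℂ (LinearMap.ker ψc) = Module.rank ℂ (R2 ⧸ J0) := by
    rw [hkerr]
    exact rank_range_of_injective φc hinj
  show (Module.rank ℂ (R2 ⧸ J1)).toENat
      = (Module.rank ℂ (R2 ⧸ J0)).toENat + (Module.rank ℂ (R2 ⧸ J2)).toENat
  rw [← e0, e1, e2, map_add, add_comm]

/-- If `f = g·h` with `I_g`, `I_h` and `m(g,h)` finite, then
`I_f = I_g + I_h + 6·m(g,h)` is finite. -/
theorem inflection_number_mul (f g h : MvPowerSeries (Fin 2) ℂ) (hf : f = g * h)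
    (hIg : interNum g (iInv g) ≠ ⊤) (hIh : interNum h (iInv h) ≠ ⊤)
    (hgh : interNum g h ≠ ⊤) :
    interNum f (iInv f) ≠ ⊤ ∧
      interNum f (iInv f) =
        interNum g (iInv g) + interNum h (iInv h) + 6 * interNum g h := by
  subst hf
  obtain ⟨r, hr⟩ := iInv_mul g h
  have hhg : interNum h g ≠ ⊤ := by rwa [interNum_comm]
  have hIg' : interNum (iInv g) g ≠ ⊤ := by rwa [interNum_comm]
  have hIh' : interNum (iInv h) h ≠ ⊤ := by rwa [interNum_comm]
  have hg3 : interNum (h ^ 3) g = interNum h g + interNum h g + interNum h g := by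
    rw [show (h : MvPowerSeries (Fin 2) ℂ) ^ 3 = h * h * h by ring,
      interNum_mul_left (h * h) h g hhg, interNum_mul_left h h g hhg]
  have hh3 : interNum (g ^ 3) h = interNum g h + interNum g h + interNum g h := by
    rw [show (g : MvPowerSeries (Fin 2) ℂ) ^ 3 = g * g * g by ring,
      interNum_mul_left (g * g) g h hgh, interNum_mul_left g g h hgh]
  have e1 : interNum g (iInv (g * h)) = interNum g (h ^ 3 * iInv g) := by
    have hrw : iInv (g * h) = h ^ 3 * iInv g + g * (g ^ 2 * iInv h + h * r) := by
      rw [hr]; ring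
    rw [hrw, interNum_add_mul]
  have e2 : interNum g (h ^ 3 * iInv g)
      = interNum h g + interNum h g + interNum h g + interNum g (iInv g) := by
    rw [interNum_comm, interNum_mul_left (h ^ 3) (iInv g) g hIg', hg3,
      interNum_comm (iInv g) g]
  have e3 : interNum h (iInv (g * h)) = interNum h (g ^ 3 * iInv h) := by
    have hrw : iInv (g * h) = g ^ 3 * iInv h + h * (h ^ 2 * iInv g + g * r) := by
      rw [hr]; ring
    rw [hrw, interNum_add_mul]
  have e4 : interNum h (g ^ 3 * iInv h)
      = interNum g h + interNum g h + interNum g h + interNum h (iInv h) := by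
    rw [interNum_comm, interNum_mul_left (g ^ 3) (iInv h) h hIh', hh3,
      interNum_comm (iInv h) h]
  have hfing : interNum g (iInv (g * h)) ≠ ⊤ := by
    rw [e1, e2]
    exact WithTop.add_ne_top.mpr
      ⟨WithTop.add_ne_top.mpr ⟨WithTop.add_ne_top.mpr ⟨hhg, hhg⟩, hhg⟩, hIg⟩
  have hfinh : interNum h (iInv (g * h)) ≠ ⊤ := by
    rw [e3, e4]
    exact WithTop.add_ne_top.mpr
      ⟨WithTop.add_ne_top.mpr ⟨WithTop.add_ne_top.mpr ⟨hgh, hgh⟩, hgh⟩, hIh⟩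
  have etot : interNum (g * h) (iInv (g * h))
      = interNum g (iInv (g * h)) + interNum h (iInv (g * h)) :=
    interNum_mul_left g h (iInv (g * h)) hfinh
  constructor
  · rw [etot]
    exact WithTop.add_ne_top.mpr ⟨hfing, hfinh⟩
  · rw [etot, e1, e2, e3, e4, interNum_comm h g]
    ring
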